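/- Let n ≥ 1 and k ≥ 1 be integers, m ≥ 1, ε > 0, and δ > 0. For each player i ∈ {1,…,n}, let v_i be a multi-unit valuation on m items that is k-minded with respect to a set K_i ⊆ {1,…,m} with |K_i| ≤ k. Let v_max = max_i v_i(m), assume v_max > 0 and δ ≤ ε·v_max/(3n²k²). Let TOP = { i : v_i(m) ≥ 3δn²k²/ε }, and define u_i = v_i^δ (the δ-marginal-rounded valuation of v_i) for i ∉ TOP, and u_i(s) = v_i(s) + |{ j ∈ K_i : j ≤ s }|·2δkn for i ∈ TOP. If the allocation (s_1,…,s_n) maximizes Σ_{i=1}^n u_i(s_i) over all allocations of m items among n players, then Σ_{i=1}^n v_i(s_i) ≥ (1−ε)·Σ_{i=1}^n v_i(o_i) for every allocation (o_1,…,o_n). -/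
import Mathlib


/-- `x` rounded down to the nearest multiple of `δ`. -/
noncomputable def roundDown (δ x : ℝ) : ℝ := δ * ⌊x / δ⌋

/-- The `δ`-marginal-rounded valuation of a multi-unit valuation `v`. -/
noncomputable def marginalRound (δ : ℝ) (v : ℕ → ℝ) (s : ℕ) : ℝ :=
  ∑ j ∈ Finset.Icc 1 s, roundDown δ (v j - v (j - 1))

lemma roundDown_le {δ : ℝ} (hδ : 0 < δ) (x : ℝ) : roundDown δ x ≤ x := by
  unfold roundDown
  calc δ * (⌊x / δ⌋ : ℝ) ≤ δ * (x / δ) :=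
        mul_le_mul_of_nonneg_left (Int.floor_le _) hδ.le
    _ = x := by field_simp

lemma sub_lt_roundDown {δ : ℝ} (hδ : 0 < δ) (x : ℝ) : x - δ < roundDown δ x := by
  unfold roundDown
  have h := Int.sub_one_lt_floor (x / δ)
  have h2 := mul_lt_mul_of_pos_left h hδ
  calc x - δ = δ * (x / δ - 1) := by field_simp
    _ < δ * (⌊x / δ⌋ : ℝ) := h2

lemma roundDown_nonneg {δ x : ℝ} (hδ : 0 < δ) (hx : 0 ≤ x) : 0 ≤ roundDown δ x := by
  unfold roundDown
  have : (0 : ℝ) ≤ (⌊x / δ⌋ : ℝ) := by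
    exact_mod_cast Int.floor_nonneg.mpr (div_nonneg hx hδ.le)
  exact mul_nonneg hδ.le this

lemma roundDown_zero (δ : ℝ) : roundDown δ 0 = 0 := by simp [roundDown]

lemma telescope_sum (v : ℕ → ℝ) (hv0 : v 0 = 0) (s : ℕ) :
    ∑ j ∈ Finset.Icc 1 s, (v j - v (j - 1)) = v s := by
  induction s with
  | zero => simp [hv0]
  | succ s ih =>
      rw [Finset.sum_Icc_succ_top (by omega : 1 ≤ s + 1)]
      simp only [Nat.add_sub_cancel]
      rw [ih]; ring

lemma mr_le {δ : ℝ} (hδ : 0 < δ) (v : ℕ → ℝ) (hv0 : v 0 = 0) (s : ℕ) :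
    marginalRound δ v s ≤ v s := by
  rw [← telescope_sum v hv0 s]
  exact Finset.sum_le_sum fun j _ => roundDown_le hδ _

lemma mr_ge {δ : ℝ} (hδ : 0 < δ) (v : ℕ → ℝ) (hv0 : v 0 = 0) (K : Finset ℕ) (k m : ℕ)
    (hKcard : K.card ≤ k)
    (hkm : ∀ j : ℕ, 1 ≤ j → j ≤ m → j ∉ K → v j = v (j - 1))
    (s : ℕ) (hs : s ≤ m) :
    v s - (k : ℝ) * δ ≤ marginalRound δ v s := by
  have key : ∑ j ∈ Finset.Icc 1 s, (v j - v (j - 1) - roundDown δ (v j - v (j - 1)))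
      ≤ (k : ℝ) * δ := by
    have h0 : ∀ j ∈ Finset.Icc 1 s,
        (v j - v (j - 1) - roundDown δ (v j - v (j - 1))) ≠ 0 → j ∈ K := by
      intro j hj hne
      by_contra hjK
      have hj' := Finset.mem_Icc.mp hj
      have hv : v j = v (j - 1) := hkm j hj'.1 (hj'.2.trans hs) hjK
      apply hne
      rw [hv]
      simp [roundDown_zero]
    rw [← Finset.sum_filter_of_ne h0]
    have hcard : ((Finset.Icc 1 s).filter (· ∈ K)).card ≤ k := by
      refine le_trans (Finset.card_le_card ?_) hKcard
      intro j hj; exact (Finset.mem_filter.mp hj).2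
    calc ∑ j ∈ (Finset.Icc 1 s).filter (· ∈ K),
          (v j - v (j - 1) - roundDown δ (v j - v (j - 1)))
        ≤ ((Finset.Icc 1 s).filter (· ∈ K)).card • δ := by
          apply Finset.sum_le_card_nsmul
          intro j _
          have := sub_lt_roundDown hδ (v j - v (j - 1))
          linarith
      _ = (((Finset.Icc 1 s).filter (· ∈ K)).card : ℝ) * δ := by
          rw [nsmul_eq_mul]
      _ ≤ (k : ℝ) * δ := by
          apply mul_le_mul_of_nonneg_right _ hδ.le
          exact_mod_cast hcard
  have htel := telescope_sum v hv0 s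
  have hsplit : ∑ j ∈ Finset.Icc 1 s, (v j - v (j - 1) - roundDown δ (v j - v (j - 1)))
      = (∑ j ∈ Finset.Icc 1 s, (v j - v (j - 1))) - marginalRound δ v s := by
    rw [marginalRound, ← Finset.sum_sub_distrib]
  rw [hsplit, htel] at key
  linarith
/-- approximation guarantee of the rounding-plus-rewards scheme.
With `k`-minded valuations `v_i`, `v_max = max_i v_i(m) > 0`,
`δ ≤ ε·v_max/(3n²k²)`, `TOP = {i : v_i(m) ≥ 3δn²k²/ε}`, and the modified
valuations `u_i` (rewards of `2δkn` per passed step for `i ∈ TOP`,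
`δ`-marginal-rounded valuation otherwise), any allocation maximizing
`Σ u_i(s_i)` is a `(1−ε)`-approximation to the optimal welfare `Σ v_i(o_i)`. -/
theorem rounded_reward_welfare_approximation
    (n k m : ℕ) (hn : 1 ≤ n) (hk : 1 ≤ k) (hm : 1 ≤ m)
    (ε δ : ℝ) (hε : 0 < ε) (hδ : 0 < δ)
    (v : Fin n → ℕ → ℝ)
    (hv0 : ∀ i, v i 0 = 0)
    (hvmono : ∀ i, ∀ s t : ℕ, s ≤ t → t ≤ m → v i s ≤ v i t)
    (K : Fin n → Finset ℕ)
    (hKsub : ∀ i, ∀ x ∈ K i, 1 ≤ x ∧ x ≤ m)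
    (hKcard : ∀ i, (K i).card ≤ k)
    (hkm : ∀ i, ∀ s : ℕ, 1 ≤ s → s ≤ m → s ∉ K i → v i s = v i (s - 1))
    (vmax : ℝ) (hub : ∀ i, v i m ≤ vmax) (hmem : ∃ i, v i m = vmax)
    (hvmaxpos : 0 < vmax)
    (hδle : δ ≤ ε * vmax / (3 * (n : ℝ) ^ 2 * (k : ℝ) ^ 2))
    (u : Fin n → ℕ → ℝ)
    (hu : ∀ i s, u i s =
      if 3 * δ * (n : ℝ) ^ 2 * (k : ℝ) ^ 2 / ε ≤ v i m then
        v i s + (((K i).filter (fun x => x ≤ s)).card : ℝ) * (2 * δ * k * n)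
      else marginalRound δ (v i) s)
    (salloc : Fin n → ℕ) (hsalloc : ∑ i, salloc i ≤ m)
    (hmax : ∀ t : Fin n → ℕ, (∑ i, t i ≤ m) → ∑ i, u i (t i) ≤ ∑ i, u i (salloc i)) :
    ∀ o : Fin n → ℕ, (∑ i, o i ≤ m) →
      (1 - ε) * ∑ i, v i (o i) ≤ ∑ i, v i (salloc i) := by
  intro o ho
  have hn' : (1 : ℝ) ≤ n := by exact_mod_cast hn
  have hk' : (1 : ℝ) ≤ k := by exact_mod_cast hk
  have hnpos : (0 : ℝ) < n := by linarith
  have hkpos : (0 : ℝ) < k := by linarith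
  -- key numeric fact: 3 δ n² k² ≤ ε vmax
  have hδε : 3 * δ * (n : ℝ) ^ 2 * (k : ℝ) ^ 2 ≤ ε * vmax := by
    have hpos : (0 : ℝ) < 3 * (n : ℝ) ^ 2 * (k : ℝ) ^ 2 := by positivity
    rw [le_div_iff₀ hpos] at hδle
    nlinarith [hδle]
  -- each allocation entry is ≤ m
  have hsle : ∀ i, salloc i ≤ m := fun i =>
    le_trans (Finset.single_le_sum (fun j _ => Nat.zero_le _) (Finset.mem_univ i)) hsalloc
  have hole : ∀ i, o i ≤ m := fun i =>
    le_trans (Finset.single_le_sum (fun j _ => Nat.zero_le _) (Finset.mem_univ i)) ho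
  -- lower bound on u
  have hulow : ∀ i, ∀ s : ℕ, s ≤ m → v i s - (k : ℝ) * δ ≤ u i s := by
    intro i s hs
    rw [hu]
    split
    · have : (0 : ℝ) ≤ (((K i).filter (fun x => x ≤ s)).card : ℝ) * (2 * δ * k * n) := by
        positivity
      nlinarith
    · exact mr_ge hδ (v i) (hv0 i) (K i) k m (hKcard i) (hkm i) s hs
  -- upper bound on u
  have huhigh : ∀ i, ∀ s : ℕ, u i s ≤ v i s + 2 * δ * (k : ℝ) ^ 2 * n := by
    intro i s
    rw [hu]
    split
    · have hc : (((K i).filter (fun x => x ≤ s)).card : ℝ) ≤ (k : ℝ) := by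
        exact_mod_cast le_trans (Finset.card_le_card (Finset.filter_subset _ _)) (hKcard i)
      have h2 : (0 : ℝ) ≤ 2 * δ * k * n := by positivity
      nlinarith
    · have h1 := mr_le hδ (v i) (hv0 i) s
      have h2 : (0:ℝ) ≤ 2 * δ * (k:ℝ)^2 * n := by positivity
      linarith
  -- u i 0 = 0
  have hu0 : ∀ i, u i 0 = 0 := by
    intro i
    rw [hu]
    split
    · have : (K i).filter (fun x => x ≤ 0) = ∅ := by
        apply Finset.filter_false_of_mem
        intro x hx
        have := (hKsub i x hx).1
        omega
      rw [this, hv0]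
      simp
    · simp [marginalRound]
  -- v nonneg on [0,m]
  have hvnn : ∀ i, ∀ s : ℕ, s ≤ m → 0 ≤ v i s := by
    intro i s hs
    have := hvmono i 0 s (Nat.zero_le _) hs
    rw [hv0 i] at this
    exact this
  -- the top player
  obtain ⟨istar, histar⟩ := hmem
  have htop : 3 * δ * (n : ℝ) ^ 2 * (k : ℝ) ^ 2 / ε ≤ v istar m := by
    rw [histar, div_le_iff₀ hε]
    nlinarith
  have hustar : vmax ≤ u istar m := by
    rw [hu, if_pos htop, histar]
    have : (0 : ℝ) ≤ (((K istar).filter (fun x => x ≤ m)).card : ℝ) * (2 * δ * k * n) := by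
      positivity
    linarith
  -- maximality against the all-to-istar allocation
  have hmax1 : vmax ≤ ∑ i, u i (salloc i) := by
    have hsum : ∑ i, (fun j => if j = istar then m else 0) i ≤ m := by
      simp
    have h := hmax _ hsum
    have heq : ∑ i, u i (if i = istar then m else 0) = u istar m := by
      rw [Fintype.sum_eq_single istar]
      · simp
      · intro j hj
        simp [hj, hu0]
    simp only [heq] at h
    linarith
  -- maximality against o
  have hmax2 : ∑ i, u i (o i) ≤ ∑ i, u i (salloc i) := hmax o ho
  -- sum bounds
  have hA : (∑ i, v i (o i)) - (n : ℝ) * ((k : ℝ) * δ) ≤ ∑ i, u i (o i) := by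
    have := Finset.sum_le_sum (fun i (_ : i ∈ Finset.univ) => hulow i (o i) (hole i))
    rw [Finset.sum_sub_distrib, Finset.sum_const, Finset.card_univ, Fintype.card_fin,
      nsmul_eq_mul] at this
    linarith
  have hB : ∑ i, u i (salloc i) ≤ (∑ i, v i (salloc i)) + (n : ℝ) * (2 * δ * (k : ℝ) ^ 2 * n) := by
    have := Finset.sum_le_sum (fun i (_ : i ∈ Finset.univ) => huhigh i (salloc i))
    rw [Finset.sum_add_distrib, Finset.sum_const, Finset.card_univ, Fintype.card_fin,
      nsmul_eq_mul] at this
    linarith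
  set A := ∑ i, v i (o i) with hAdef
  set B := ∑ i, v i (salloc i) with hBdef
  have hB1 : A - (n : ℝ) * ((k : ℝ) * δ) - (n : ℝ) * (2 * δ * (k : ℝ) ^ 2 * n) ≤ B := by
    linarith
  have hB2 : vmax - (n : ℝ) * (2 * δ * (k : ℝ) ^ 2 * n) ≤ B := by linarith
  have hBnn : 0 ≤ B := Finset.sum_nonneg fun i _ => hvnn i (salloc i) (hsle i)
  have hAnn : 0 ≤ A := Finset.sum_nonneg fun i _ => hvnn i (o i) (hole i)
  have hnk1 : (1:ℝ) ≤ (n:ℝ) * k := by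
    have h := mul_le_mul hn' hk' zero_le_one (le_trans zero_le_one hn')
    linarith
  have haux : (0:ℝ) ≤ δ * ((n:ℝ) * k) * ((n:ℝ) * k - 1) :=
    mul_nonneg (mul_nonneg hδ.le (by positivity)) (by linarith)
  have hpos1 : (0:ℝ) ≤ δ * (n:ℝ)^2 * (k:ℝ)^2 := by positivity
  have hexp1 : (n:ℝ) * (2 * δ * (k:ℝ)^2 * n)
      = 3 * δ * (n:ℝ)^2 * (k:ℝ)^2 - δ * (n:ℝ)^2 * (k:ℝ)^2 := by ring
  have hc1 : (n:ℝ) * (2 * δ * (k:ℝ)^2 * n) ≤ 3 * δ * (n:ℝ)^2 * (k:ℝ)^2 := by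
    linarith
  have hexp2 : δ * ((n:ℝ) * k) * ((n:ℝ) * k - 1)
      = 3 * δ * (n:ℝ)^2 * (k:ℝ)^2
        - ((n:ℝ) * ((k:ℝ) * δ) + (n:ℝ) * (2 * δ * (k:ℝ)^2 * n))
        - (δ * (n:ℝ)^2 * (k:ℝ)^2 - δ * (n:ℝ)^2 * (k:ℝ)^2) := by ring
  have hc2 : (n:ℝ) * ((k:ℝ) * δ) + (n:ℝ) * (2 * δ * (k:ℝ)^2 * n)
      ≤ 3 * δ * (n:ℝ)^2 * (k:ℝ)^2 := by linarith
  rcases le_or_gt ε 1 with hε1 | hε1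
  · rcases le_total A vmax with hAv | hAv
    · have hεA : (1 - ε) * A ≤ (1 - ε) * vmax :=
        mul_le_mul_of_nonneg_left hAv (by linarith)
      have hrw : (1 - ε) * vmax = vmax - ε * vmax := by ring
      linarith
    · have hεA : ε * vmax ≤ ε * A := mul_le_mul_of_nonneg_left hAv hε.le
      have hrw : (1 - ε) * A = A - ε * A := by ring
      rw [hrw]
      linarith
  · have : (1 - ε) * A ≤ 0 := mul_nonpos_of_nonpos_of_nonneg (by linarith) hAnn
    linarith
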